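/- arXiv:1909.10093 — 3 statements merged into one kernel-verified Lean document; each statement's English description precedes it below -/
import Mathlib

section
/- Let (X, d) be a metric space, let f_1, …, f_m : X → X be Lipschitz maps and μ a probability vector on {1, …, m}. Fix α ∈ (0,1] and r ∈ (0,1), and assume Σ_{j=1}^m μ_j · d(f_j(x), f_j(y))^α ≤ r · d(x, y)^α for all x, y ∈ X. Let ν₁, ν₂ be Borel probability measures on X and let D ∈ ℝ be such that ∫ g dν₁ − ∫ g dν₂ ≤ D for every bounded Borel-measurable g : X → ℝ with |g(u) − g(v)| ≤ d(u, v)^α for all u, v. Then for every bounded Borel-measurable f : X → ℝ with |f(u) − f(v)| ≤ d(u, v)^α for all u, v, one has ∫ f d(P*ν₁) − ∫ f d(P*ν₂) ≤ r · D, where P*ν = Σ_{j=1}^m μ_j · ν∘f_j^{-1}. In particular, P* is a strict contraction with factor r in the Kantorovich-type metric d_α(ν₁, ν₂) = sup over such test functions f of ∫ f dν₁ − ∫ f dν₂. -/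
open MeasureTheory

/-- The Markov operator on Borel measures associated with an iterated function system:
`P*ν = Σ_j μ_j · ν ∘ f_j⁻¹`. -/
noncomputable def markovOp {X : Type*} [MeasurableSpace X] {m : ℕ}
    (μ : Fin m → ℝ) (f : Fin m → X → X) (ν : Measure X) : Measure X :=
  ∑ j, ENNReal.ofReal (μ j) • ν.map (f j)


private lemma integral_markovOp_aux {X : Type*} [MetricSpace X] [MeasurableSpace X] [BorelSpace X]
    {m : ℕ} (F : Fin m → X → X) (hF : ∀ j, Measurable (F j))
    (μ : Fin m → ℝ) (hμ0 : ∀ j, 0 ≤ μ j)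
    (ν : Measure X) [IsProbabilityMeasure ν]
    (f : X → ℝ) (hf : Measurable f) (C : ℝ) (hC : ∀ x, |f x| ≤ C) :
    ∫ x, f x ∂(markovOp μ F ν) = ∑ j, μ j * ∫ x, f (F j x) ∂ν := by
  have hint : ∀ j ∈ Finset.univ, Integrable f (ENNReal.ofReal (μ j) • ν.map (F j)) := by
    intro j _
    have hmap : IsFiniteMeasure (ENNReal.ofReal (μ j) • ν.map (F j)) := by
      constructor
      simp [Measure.map_apply (hF j) MeasurableSet.univ]
    exact (integrable_const |C|).mono' hf.aestronglyMeasurable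
      (Filter.Eventually.of_forall fun x => (hC x).trans (le_abs_self C))
  rw [markovOp, integral_finset_sum_measure hint]
  refine Finset.sum_congr rfl fun j _ => ?_
  rw [integral_smul_measure, ENNReal.toReal_ofReal (hμ0 j),
    integral_map (hF j).aemeasurable hf.aestronglyMeasurable, smul_eq_mul]

/-- Under the contraction-on-average condition
`Σ_j μ_j · d(f_j x, f_j y)^α ≤ r · d(x,y)^α`, if `D` bounds `∫ g dν₁ − ∫ g dν₂` over all
bounded Borel test functions `g` with Hölder constant `1` and exponent `α`, then for every
such test function `f`, `∫ f d(P*ν₁) − ∫ f d(P*ν₂) ≤ r·D`; i.e. `P*` is a strict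
contraction with factor `r` in the Kantorovich-type metric `d_α`. -/
theorem markov_operator_contraction_holder
    {X : Type*} [MetricSpace X] [MeasurableSpace X] [BorelSpace X]
    {m : ℕ} (hm : 1 ≤ m)
    (F : Fin m → X → X) (L : Fin m → NNReal) (hLip : ∀ j, LipschitzWith (L j) (F j))
    (μ : Fin m → ℝ) (hμ0 : ∀ j, 0 ≤ μ j) (hμ1 : ∑ j, μ j = 1)
    (α : ℝ) (hα0 : 0 < α) (hα1 : α ≤ 1)
    (r : ℝ) (hr0 : 0 < r) (hr1 : r < 1)
    (hcontr : ∀ x y : X, ∑ j, μ j * dist (F j x) (F j y) ^ α ≤ r * dist x y ^ α)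
    (ν₁ ν₂ : Measure X) [IsProbabilityMeasure ν₁] [IsProbabilityMeasure ν₂]
    (D : ℝ)
    (hD : ∀ g : X → ℝ, Measurable g → (∃ C : ℝ, ∀ x, |g x| ≤ C) →
      (∀ u v : X, |g u - g v| ≤ dist u v ^ α) →
      (∫ x, g x ∂ν₁) - (∫ x, g x ∂ν₂) ≤ D) :
    ∀ f : X → ℝ, Measurable f → (∃ C : ℝ, ∀ x, |f x| ≤ C) →
      (∀ u v : X, |f u - f v| ≤ dist u v ^ α) →
      (∫ x, f x ∂(markovOp μ F ν₁)) - (∫ x, f x ∂(markovOp μ F ν₂)) ≤ r * D := by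
  intro f hf hbd hHold
  obtain ⟨C, hC⟩ := hbd
  have hF : ∀ j, Measurable (F j) := fun j => (hLip j).continuous.measurable
  set g : X → ℝ := fun x => r⁻¹ * ∑ j, μ j * f (F j x) with hg
  have hgmeas : Measurable g :=
    measurable_const.mul (Finset.measurable_sum _ fun j _ =>
      measurable_const.mul (hf.comp (hF j)))
  have habs : ∀ x, |∑ j, μ j * f (F j x)| ≤ C := by
    intro x
    calc |∑ j, μ j * f (F j x)| ≤ ∑ j, |μ j * f (F j x)| := Finset.abs_sum_le_sum_abs _ _
      _ ≤ ∑ j, μ j * C := by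
          refine Finset.sum_le_sum fun j _ => ?_
          rw [abs_mul, abs_of_nonneg (hμ0 j)]
          exact mul_le_mul_of_nonneg_left (hC _) (hμ0 j)
      _ = C := by rw [← Finset.sum_mul, hμ1, one_mul]
  have hgbd : ∀ x, |g x| ≤ r⁻¹ * C := by
    intro x
    rw [hg, abs_mul, abs_of_nonneg (le_of_lt (inv_pos.mpr hr0))]
    exact mul_le_mul_of_nonneg_left (habs x) (le_of_lt (inv_pos.mpr hr0))
  have hgHold : ∀ u v : X, |g u - g v| ≤ dist u v ^ α := by
    intro u v
    have h1 : g u - g v = r⁻¹ * ∑ j, μ j * (f (F j u) - f (F j v)) := by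
      simp only [hg]
      rw [← mul_sub, ← Finset.sum_sub_distrib]
      simp_rw [mul_sub]
    rw [h1, abs_mul, abs_of_nonneg (le_of_lt (inv_pos.mpr hr0))]
    have h2 : |∑ j, μ j * (f (F j u) - f (F j v))| ≤ r * dist u v ^ α := by
      calc |∑ j, μ j * (f (F j u) - f (F j v))| ≤ ∑ j, |μ j * (f (F j u) - f (F j v))| :=
            Finset.abs_sum_le_sum_abs _ _
        _ ≤ ∑ j, μ j * dist (F j u) (F j v) ^ α := by
            refine Finset.sum_le_sum fun j _ => ?_
            rw [abs_mul, abs_of_nonneg (hμ0 j)]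
            exact mul_le_mul_of_nonneg_left (hHold _ _) (hμ0 j)
        _ ≤ r * dist u v ^ α := hcontr u v
    calc r⁻¹ * |∑ j, μ j * (f (F j u) - f (F j v))| ≤ r⁻¹ * (r * dist u v ^ α) :=
          mul_le_mul_of_nonneg_left h2 (le_of_lt (inv_pos.mpr hr0))
      _ = dist u v ^ α := by field_simp
  have key : ∀ (ν : Measure X) [IsProbabilityMeasure ν],
      ∫ x, f x ∂(markovOp μ F ν) = r * ∫ x, g x ∂ν := by
    intro ν _
    rw [integral_markovOp_aux F hF μ hμ0 ν f hf C hC]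
    have hint : ∀ j ∈ Finset.univ, Integrable (fun x => μ j * f (F j x)) ν := by
      intro j _
      refine (integrable_const (|μ j| * |C|)).mono'
        ((measurable_const.mul (hf.comp (hF j))).aestronglyMeasurable)
        (Filter.Eventually.of_forall fun x => ?_)
      simp only [Real.norm_eq_abs, abs_mul]
      exact mul_le_mul_of_nonneg_left ((hC _).trans (le_abs_self C)) (abs_nonneg _)
    rw [hg]
    rw [integral_const_mul, integral_finset_sum _ hint]
    simp only [integral_const_mul]
    rw [← mul_assoc, mul_inv_cancel₀ (ne_of_gt hr0), one_mul]
  rw [key ν₁, key ν₂, ← mul_sub]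
  exact mul_le_mul_of_nonneg_left (hD g hgmeas ⟨r⁻¹ * C, hgbd⟩ hgHold) (le_of_lt hr0)
end

section
/- Let (X, d) be a metric space, let f_1, …, f_m : X → X be maps such that each f_j is L_j-Lipschitz, let μ be a probability vector on {1, …, m}, and suppose the expected Lipschitz constant satisfies Σ_{j=1}^m μ_j L_j ≤ r for some r ∈ (0,1). Let ν₁, ν₂ be Borel probability measures on X and let D ∈ ℝ be such that ∫ g dν₁ − ∫ g dν₂ ≤ D for every bounded Borel-measurable 1-Lipschitz g : X → ℝ. Then for every bounded Borel-measurable 1-Lipschitz f : X → ℝ, one has ∫ f d(P*ν₁) − ∫ f d(P*ν₂) ≤ r · D, where P*ν = Σ_{j=1}^m μ_j · ν∘f_j^{-1}; that is, P* is a contractive Markov operator with factor r in the Wasserstein-type (Kantorovich–Rubinstein dual) metric over such test functions. -/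
open MeasureTheory

/-- If each `f_j` is `L_j`-Lipschitz and the expected Lipschitz constant
satisfies `Σ_j μ_j L_j ≤ r` with `r ∈ (0,1)`, and `D` bounds `∫ g dν₁ − ∫ g dν₂` over all
bounded Borel-measurable `1`-Lipschitz test functions `g`, then for every such test
function `f`, `∫ f d(P*ν₁) − ∫ f d(P*ν₂) ≤ r·D`; i.e. `P*` is a contractive Markov operator
with factor `r` in the Kantorovich–Rubinstein dual metric. -/
theorem markov_operator_contraction_lipschitz
    {X : Type*} [MetricSpace X] [MeasurableSpace X] [BorelSpace X]
    {m : ℕ} (hm : 1 ≤ m)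
    (F : Fin m → X → X) (L : Fin m → NNReal) (hLip : ∀ j, LipschitzWith (L j) (F j))
    (μ : Fin m → ℝ) (hμ0 : ∀ j, 0 ≤ μ j) (hμ1 : ∑ j, μ j = 1)
    (r : ℝ) (hr0 : 0 < r) (hr1 : r < 1)
    (havg : ∑ j, μ j * (L j : ℝ) ≤ r)
    (ν₁ ν₂ : Measure X) [IsProbabilityMeasure ν₁] [IsProbabilityMeasure ν₂]
    (D : ℝ)
    (hD : ∀ g : X → ℝ, Measurable g → (∃ C : ℝ, ∀ x, |g x| ≤ C) →
      (∀ u v : X, |g u - g v| ≤ dist u v) →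
      (∫ x, g x ∂ν₁) - (∫ x, g x ∂ν₂) ≤ D) :
    ∀ f : X → ℝ, Measurable f → (∃ C : ℝ, ∀ x, |f x| ≤ C) →
      (∀ u v : X, |f u - f v| ≤ dist u v) →
      (∫ x, f x ∂(markovOp μ F ν₁)) - (∫ x, f x ∂(markovOp μ F ν₂)) ≤ r * D := by

  rintro f hfm ⟨C, hC⟩ hf1
  have hFm : ∀ j, Measurable (F j) := fun j => (hLip j).continuous.measurable
  have hD0 : 0 ≤ D := by
    have := hD (fun _ => 0) measurable_const ⟨0, by simp⟩ (by simp [dist_nonneg])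
    simpa using this
  have hX : Nonempty X := by
    by_contra h
    have h1 : ν₁ Set.univ = 1 := measure_univ
    rw [Set.univ_eq_empty_iff.mpr (not_nonempty_iff.mp h)] at h1
    simp at h1
  have hInt : ∀ (ν : Measure X) [IsProbabilityMeasure ν] (j : Fin m),
      Integrable (fun x => f (F j x)) ν := by
    intro ν _ j
    refine (integrable_const C).mono' ((hfm.comp (hFm j)).aestronglyMeasurable) ?_
    filter_upwards with x
    simpa using hC (F j x)
  have key : ∀ (ν : Measure X) [IsProbabilityMeasure ν],
      ∫ x, f x ∂(markovOp μ F ν) = ∑ j, μ j * ∫ x, f (F j x) ∂ν := by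
    intro ν _
    rw [markovOp, integral_finset_sum_measure (fun j _ =>
      ((integrable_map_measure hfm.aestronglyMeasurable (hFm j).aemeasurable).mpr
        (hInt ν j)).smul_measure ENNReal.ofReal_ne_top)]
    refine Finset.sum_congr rfl fun j _ => ?_
    rw [integral_smul_measure, integral_map (hFm j).aemeasurable hfm.aestronglyMeasurable,
      ENNReal.toReal_ofReal (hμ0 j), smul_eq_mul]
  have hjD : ∀ j : Fin m,
      (∫ x, f (F j x) ∂ν₁) - (∫ x, f (F j x) ∂ν₂) ≤ (L j : ℝ) * D := by
    intro j
    rcases eq_or_ne (L j : ℝ) 0 with h0 | h0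
    · obtain ⟨x₀⟩ := hX
      have hconst : ∀ x, F j x = F j x₀ := by
        intro x
        have := (hLip j).dist_le_mul x x₀
        rw [h0, zero_mul] at this
        exact dist_le_zero.mp this
      simp only [fun x => congrArg f (hconst x)]
      simp [h0]
    · have hLpos : 0 < (L j : ℝ) := lt_of_le_of_ne (L j).coe_nonneg (Ne.symm h0)
      have hinv : (0:ℝ) ≤ (L j : ℝ)⁻¹ := inv_nonneg.mpr hLpos.le
      have h1 := hD (fun x => (L j : ℝ)⁻¹ * f (F j x))
        (measurable_const.mul (hfm.comp (hFm j)))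
        ⟨(L j : ℝ)⁻¹ * C, fun x => by
          rw [abs_mul, abs_of_nonneg hinv]
          exact mul_le_mul_of_nonneg_left (hC _) hinv⟩
        (fun u v => by
          have h2 : dist (F j u) (F j v) ≤ (L j : ℝ) * dist u v := (hLip j).dist_le_mul u v
          calc |(L j : ℝ)⁻¹ * f (F j u) - (L j : ℝ)⁻¹ * f (F j v)|
              = (L j : ℝ)⁻¹ * |f (F j u) - f (F j v)| := by
                rw [← mul_sub, abs_mul, abs_of_nonneg hinv]
            _ ≤ (L j : ℝ)⁻¹ * dist (F j u) (F j v) :=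
                mul_le_mul_of_nonneg_left (hf1 _ _) hinv
            _ ≤ (L j : ℝ)⁻¹ * ((L j : ℝ) * dist u v) :=
                mul_le_mul_of_nonneg_left h2 hinv
            _ = dist u v := by field_simp)
      rw [integral_const_mul, integral_const_mul, ← mul_sub] at h1
      have h3 := mul_le_mul_of_nonneg_left h1 hLpos.le
      rw [← mul_assoc, mul_inv_cancel₀ h0, one_mul] at h3
      exact h3
  rw [key ν₁, key ν₂, ← Finset.sum_sub_distrib]
  calc ∑ j, (μ j * ∫ x, f (F j x) ∂ν₁ - μ j * ∫ x, f (F j x) ∂ν₂)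
      = ∑ j, μ j * ((∫ x, f (F j x) ∂ν₁) - ∫ x, f (F j x) ∂ν₂) := by
        exact Finset.sum_congr rfl fun j _ => (mul_sub _ _ _).symm
    _ ≤ ∑ j, μ j * ((L j : ℝ) * D) :=
        Finset.sum_le_sum fun j _ => mul_le_mul_of_nonneg_left (hjD j) (hμ0 j)
    _ = (∑ j, μ j * (L j : ℝ)) * D := by
        rw [Finset.sum_mul]; exact Finset.sum_congr rfl fun j _ => (mul_assoc _ _ _).symm
    _ ≤ r * D := mul_le_mul_of_nonneg_right havg hD0
end

section
/- Let (X, d) be a metric space with its Borel σ-algebra and fix constants B, M > 0. For Borel probability measures ν₁, ν₂ on X define D(ν₁, ν₂) := sup { ∫ h dν₁ − ∫ h dν₂ : h : X → ℝ Borel-measurable, |h(x)| ≤ B for all x, and |h(u) − h(v)| ≤ M·d(u, v) for all u, v }. Let μ, μ' be probability vectors on {1, …, m} with Σ_j |μ_j − μ'_j| ≤ e, and let f_1, …, f_m and g_1, …, g_m be Lipschitz maps X → X with d(f_j(x), g_j(x)) ≤ δ_j for all x and each j. Define P*ν = Σ_j μ_j · ν∘f_j^{-1} and Q*ν = Σ_j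 μ'_j · ν∘g_j^{-1}, and suppose there is r ∈ (0,1) such that D(P*ν₁, P*ν₂) ≤ r·D(ν₁, ν₂) for all Borel probability measures ν₁, ν₂. If ν* and η* are Borel probability measures with P*ν* = ν* and Q*η* = η*, then D(ν*, η*) ≤ (1/(1 − r)) · ( M·Σ_{j=1}^m δ_j + B·e ). -/
open MeasureTheory

/-- The dual (Kantorovich-type) distance
`D(ν₁, ν₂) = sup { ∫ h dν₁ − ∫ h dν₂ : h Borel, |h| ≤ B, M-Lipschitz }`. -/
noncomputable def dualDist {X : Type*} [MetricSpace X] [MeasurableSpace X]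
    (B M : ℝ) (ν₁ ν₂ : Measure X) : ℝ :=
  sSup {c : ℝ | ∃ h : X → ℝ, Measurable h ∧ (∀ x, |h x| ≤ B) ∧
    (∀ u v : X, |h u - h v| ≤ M * dist u v) ∧
    c = (∫ x, h x ∂ν₁) - (∫ x, h x ∂ν₂)}


section helpers
variable {X : Type*} [MetricSpace X] [MeasurableSpace X] [BorelSpace X]

lemma bdd_integrable {h : X → ℝ} (hh : Measurable h) {B : ℝ} (hb : ∀ x, |h x| ≤ B)
    (ν : Measure X) [IsFiniteMeasure ν] : Integrable h ν :=
  (integrable_const B).mono' hh.aestronglyMeasurable (ae_of_all _ (fun x => by simpa using hb x))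

lemma abs_integral_le' {h : X → ℝ} (hh : Measurable h) {B : ℝ} (hb : ∀ x, |h x| ≤ B)
    (ν : Measure X) [IsProbabilityMeasure ν] : |∫ x, h x ∂ν| ≤ B := by
  have := norm_integral_le_of_norm_le_const (μ := ν) (f := h) (C := B)
    (ae_of_all _ (fun x => by simpa using hb x))
  simpa using this

lemma dualDist_bddAbove (B M : ℝ) (ν₁ ν₂ : Measure X)
    [IsProbabilityMeasure ν₁] [IsProbabilityMeasure ν₂] :
    BddAbove {c : ℝ | ∃ h : X → ℝ, Measurable h ∧ (∀ x, |h x| ≤ B) ∧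
      (∀ u v : X, |h u - h v| ≤ M * dist u v) ∧
      c = (∫ x, h x ∂ν₁) - (∫ x, h x ∂ν₂)} := by
  refine ⟨2 * B, ?_⟩
  rintro c ⟨h, hh, hb, _, rfl⟩
  have h1 := abs_integral_le' hh hb ν₁
  have h2 := abs_integral_le' hh hb ν₂
  have := abs_sub (∫ x, h x ∂ν₁) (∫ x, h x ∂ν₂)
  nlinarith [abs_le.1 h1, abs_le.1 h2]

lemma dualDist_mem_zero (B M : ℝ) (hB : 0 ≤ B) (hM : 0 ≤ M) (ν₁ ν₂ : Measure X) :
    (0 : ℝ) ∈ {c : ℝ | ∃ h : X → ℝ, Measurable h ∧ (∀ x, |h x| ≤ B) ∧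
      (∀ u v : X, |h u - h v| ≤ M * dist u v) ∧
      c = (∫ x, h x ∂ν₁) - (∫ x, h x ∂ν₂)} :=
  ⟨0, measurable_const, fun _ => by simpa using hB,
    fun u v => by simpa using mul_nonneg hM dist_nonneg, by simp⟩

lemma dualDist_triangle (B M : ℝ) (hB : 0 ≤ B) (hM : 0 ≤ M) (ν₁ ν₂ ν₃ : Measure X)
    [IsProbabilityMeasure ν₁] [IsProbabilityMeasure ν₂] [IsProbabilityMeasure ν₃] :
    dualDist B M ν₁ ν₃ ≤ dualDist B M ν₁ ν₂ + dualDist B M ν₂ ν₃ := by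
  apply csSup_le ⟨0, dualDist_mem_zero B M hB hM ν₁ ν₃⟩
  rintro c ⟨h, hh, hb, hl, rfl⟩
  have h12 : (∫ x, h x ∂ν₁) - (∫ x, h x ∂ν₂) ≤ dualDist B M ν₁ ν₂ :=
    le_csSup (dualDist_bddAbove B M ν₁ ν₂) ⟨h, hh, hb, hl, rfl⟩
  have h23 : (∫ x, h x ∂ν₂) - (∫ x, h x ∂ν₃) ≤ dualDist B M ν₂ ν₃ :=
    le_csSup (dualDist_bddAbove B M ν₂ ν₃) ⟨h, hh, hb, hl, rfl⟩
  linarith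

lemma markovOp_isProb {m : ℕ} (μ : Fin m → ℝ) (hμ0 : ∀ j, 0 ≤ μ j) (hμ1 : ∑ j, μ j = 1)
    (f : Fin m → X → X) (hf : ∀ j, Measurable (f j)) (ν : Measure X)
    [IsProbabilityMeasure ν] : IsProbabilityMeasure (markovOp μ f ν) := by
  constructor
  rw [markovOp, Measure.finset_sum_apply]
  have : ∀ j : Fin m, (ENNReal.ofReal (μ j) • ν.map (f j)) Set.univ = ENNReal.ofReal (μ j) := by
    intro j
    rw [Measure.smul_apply, Measure.map_apply (hf j) MeasurableSet.univ]
    simp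
  simp_rw [this]
  rw [← ENNReal.ofReal_sum_of_nonneg (fun j _ => hμ0 j), hμ1, ENNReal.ofReal_one]

lemma integral_markovOp {m : ℕ} (μ : Fin m → ℝ) (hμ0 : ∀ j, 0 ≤ μ j)
    (f : Fin m → X → X) (hf : ∀ j, Measurable (f j)) (ν : Measure X)
    [IsFiniteMeasure ν] {h : X → ℝ} (hh : Measurable h) {B : ℝ} (hb : ∀ x, |h x| ≤ B) :
    ∫ x, h x ∂(markovOp μ f ν) = ∑ j, μ j * ∫ x, h (f j x) ∂ν := by
  have hint : ∀ j : Fin m, Integrable h (ν.map (f j)) := by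
    intro j
    refine (integrable_map_measure hh.aestronglyMeasurable (hf j).aemeasurable).mpr ?_
    exact bdd_integrable (hh.comp (hf j)) (fun x => hb _) ν
  rw [markovOp, integral_finset_sum_measure (fun j _ => (hint j).smul_measure ENNReal.ofReal_ne_top)]
  refine Finset.sum_congr rfl (fun j _ => ?_)
  rw [integral_smul_measure, integral_map (hf j).aemeasurable hh.aestronglyMeasurable,
    ENNReal.toReal_ofReal (hμ0 j), smul_eq_mul]

end helpers

/-- Suppose `Σ_j |μ_j − μ'_j| ≤ e`, the Lipschitz maps `f_j, g_j` satisfy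
`d(f_j x, g_j x) ≤ δ_j`, and the Markov operator `P*ν = Σ_j μ_j ν∘f_j⁻¹` contracts the dual
distance `D` with factor `r ∈ (0,1)` on probability measures. If `ν*` is a fixed point of
`P*` and `η*` is a fixed point of `Q*ν = Σ_j μ'_j ν∘g_j⁻¹`, then
`D(ν*, η*) ≤ (1/(1−r)) · (M·Σ_j δ_j + B·e)`. -/
theorem dist_invariant_measures_bound
    {X : Type*} [MetricSpace X] [MeasurableSpace X] [BorelSpace X]
    {m : ℕ} (hm : 1 ≤ m)
    (B M : ℝ) (hB : 0 < B) (hM : 0 < M)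
    (μ μ' : Fin m → ℝ)
    (hμ0 : ∀ j, 0 ≤ μ j) (hμ1 : ∑ j, μ j = 1)
    (hμ'0 : ∀ j, 0 ≤ μ' j) (hμ'1 : ∑ j, μ' j = 1)
    (e : ℝ) (he : ∑ j, |μ j - μ' j| ≤ e)
    (f g : Fin m → X → X)
    (Lf Lg : Fin m → NNReal)
    (hf : ∀ j, LipschitzWith (Lf j) (f j)) (hg : ∀ j, LipschitzWith (Lg j) (g j))
    (δ : Fin m → ℝ) (hδ : ∀ j, ∀ x : X, dist (f j x) (g j x) ≤ δ j)
    (r : ℝ) (hr0 : 0 < r) (hr1 : r < 1)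
    (hcontr : ∀ ν₁ ν₂ : Measure X, IsProbabilityMeasure ν₁ → IsProbabilityMeasure ν₂ →
      dualDist B M (markovOp μ f ν₁) (markovOp μ f ν₂) ≤ r * dualDist B M ν₁ ν₂)
    (νstar ηstar : Measure X)
    [IsProbabilityMeasure νstar] [IsProbabilityMeasure ηstar]
    (hν : markovOp μ f νstar = νstar) (hη : markovOp μ' g ηstar = ηstar) :
    dualDist B M νstar ηstar ≤ (1 / (1 - r)) * (M * (∑ j, δ j) + B * e) := by
  have hfm : ∀ j, Measurable (f j) := fun j => (hf j).continuous.measurable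
  have hgm : ∀ j, Measurable (g j) := fun j => (hg j).continuous.measurable
  haveI hPν : IsProbabilityMeasure (markovOp μ f νstar) := markovOp_isProb μ hμ0 hμ1 f hfm νstar
  haveI hPη : IsProbabilityMeasure (markovOp μ f ηstar) := markovOp_isProb μ hμ0 hμ1 f hfm ηstar
  haveI hQη : IsProbabilityMeasure (markovOp μ' g ηstar) := markovOp_isProb μ' hμ'0 hμ'1 g hgm ηstar
  have hX : Nonempty X := by
    by_contra h
    rw [not_nonempty_iff] at h
    have h1 : (νstar : Measure X) Set.univ = 1 := measure_univ
    rw [Set.univ_eq_empty_iff.mpr h, measure_empty] at h1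
    exact zero_ne_one h1
  have hδ0 : ∀ j, 0 ≤ δ j := fun j =>
    le_trans dist_nonneg (hδ j (Classical.arbitrary X))
  set C := M * (∑ j, δ j) + B * e with hC
  have hμle : ∀ j, μ j ≤ 1 := by
    intro j
    calc μ j ≤ ∑ i, μ i := Finset.single_le_sum (fun i _ => hμ0 i) (Finset.mem_univ j)
      _ = 1 := hμ1
  have hpert : dualDist B M (markovOp μ f ηstar) (markovOp μ' g ηstar) ≤ C := by
    apply csSup_le ⟨0, dualDist_mem_zero B M hB.le hM.le _ _⟩
    rintro c ⟨h, hh, hb, hl, rfl⟩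
    rw [integral_markovOp μ hμ0 f hfm ηstar hh hb, integral_markovOp μ' hμ'0 g hgm ηstar hh hb,
      ← Finset.sum_sub_distrib]
    have key : ∀ j : Fin m, μ j * (∫ x, h (f j x) ∂ηstar) - μ' j * (∫ x, h (g j x) ∂ηstar) ≤
        M * δ j + |μ j - μ' j| * B := by
      intro j
      have hIf : Integrable (fun x => h (f j x)) ηstar :=
        bdd_integrable (hh.comp (hfm j)) (fun x => hb _) _
      have hIg : Integrable (fun x => h (g j x)) ηstar :=
        bdd_integrable (hh.comp (hgm j)) (fun x => hb _) _
      have hd : |(∫ x, h (f j x) ∂ηstar) - ∫ x, h (g j x) ∂ηstar| ≤ M * δ j := by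
        rw [← integral_sub hIf hIg]
        have := norm_integral_le_of_norm_le_const (μ := ηstar)
          (f := fun x => h (f j x) - h (g j x)) (C := M * δ j)
          (ae_of_all _ fun x => by
            simpa using le_trans (hl _ _) (mul_le_mul_of_nonneg_left (hδ j x) hM.le))
        simpa using this
      have hgb : |∫ x, h (g j x) ∂ηstar| ≤ B :=
        abs_integral_le' (hh.comp (hgm j)) (fun x => hb _) ηstar
      set A := ∫ x, h (f j x) ∂ηstar
      set G := ∫ x, h (g j x) ∂ηstar
      calc μ j * A - μ' j * G = μ j * (A - G) + (μ j - μ' j) * G := by ring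
        _ ≤ μ j * (M * δ j) + |μ j - μ' j| * B := by
            refine add_le_add (mul_le_mul_of_nonneg_left (by linarith [abs_le.1 hd]) (hμ0 j)) ?_
            refine le_trans (le_abs_self _) ?_
            rw [abs_mul]
            exact mul_le_mul_of_nonneg_left hgb (abs_nonneg _)
        _ ≤ M * δ j + |μ j - μ' j| * B := by
            nlinarith [mul_nonneg hM.le (hδ0 j), hμ0 j, hμle j]
    calc (∑ j, (μ j * (∫ x, h (f j x) ∂ηstar) - μ' j * ∫ x, h (g j x) ∂ηstar))
        ≤ ∑ j, (M * δ j + |μ j - μ' j| * B) := Finset.sum_le_sum (fun j _ => key j)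
      _ = M * (∑ j, δ j) + (∑ j, |μ j - μ' j|) * B := by
          rw [Finset.sum_add_distrib, ← Finset.mul_sum, ← Finset.sum_mul]
      _ ≤ C := by
          rw [hC]
          have : (∑ j, |μ j - μ' j|) * B ≤ e * B :=
            mul_le_mul_of_nonneg_right he hB.le
          linarith [this, mul_comm e B]
  have key : dualDist B M νstar ηstar ≤ r * dualDist B M νstar ηstar + C := by
    calc dualDist B M νstar ηstar
        = dualDist B M (markovOp μ f νstar) (markovOp μ' g ηstar) := by rw [hν, hη]
      _ ≤ dualDist B M (markovOp μ f νstar) (markovOp μ f ηstar) +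
          dualDist B M (markovOp μ f ηstar) (markovOp μ' g ηstar) :=
          dualDist_triangle B M hB.le hM.le _ _ _
      _ ≤ r * dualDist B M νstar ηstar + C :=
          add_le_add (hcontr νstar ηstar inferInstance inferInstance) hpert
  have h1r : 0 < 1 - r := by linarith
  rw [div_mul_eq_mul_div, one_mul, le_div_iff₀ h1r]
  nlinarith [key]
end
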